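/- arXiv:2211.06736 — 8 statements merged into one kernel-verified Lean document; each statement's English description precedes it below -/
import Mathlib

section
/- Let E : ℝ → ℝ be monotone on [0, ∞), satisfy the Kneser difference equation E(x+1) = Real.exp (E x) for all x ≥ 0, and tend to +∞ as x → +∞. Then E is transexponential: for every n ∈ ℕ, E(x) > exp^[n](x) for all sufficiently large x, where exp^[n] is the n-fold composition iterate of Real.exp. -/
/-!
Unrolling the equation gives `E (y + n) = exp^[n] (E y)`, so it suffices that `E y` eventually
exceeds `y + n`. On `[2, ∞)` the value `E y` is an exponential of an exponential, hence `≥ 1`;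
so the subsolution `y ↦ exp (y - 3)` of `E (y + 1) = exp (E y)` lies below `E` on `[2, 3]`,
and stepping forward one unit at a time keeps it below `E` on all of `[2, ∞)`.
-/

open Filter Real Set

theorem apply_add_natCast_eq_iterate {f g : ℝ → ℝ} {a : ℝ}
    (hf : ∀ x, a ≤ x → f (x + 1) = g (f x)) (k : ℕ) {x : ℝ} (hx : a ≤ x) :
    f (x + k) = g^[k] (f x) := by
  induction k with
  | zero => simp
  | succ k ih =>
    rw [Nat.cast_succ, ← add_assoc, hf _ (le_add_of_le_of_nonneg hx k.cast_nonneg), ih,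
      Function.iterate_succ_apply']

theorem le_on_Ici_of_le_on_Icc {f g h : ℝ → ℝ} {a : ℝ} (hg : Monotone g)
    (hf : ∀ x, a ≤ x → g (f x) ≤ f (x + 1)) (hh : ∀ x, a ≤ x → h (x + 1) ≤ g (h x))
    (hbase : ∀ x ∈ Icc a (a + 1), h x ≤ f x) :
    ∀ x, a ≤ x → h x ≤ f x := by
  have hstep : ∀ k : ℕ, ∀ x ∈ Icc a (a + k + 1), h x ≤ f x := by
    intro k
    induction k with
    | zero => simpa using hbase
    | succ k ih =>
      rintro x ⟨hax, hxk⟩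
      by_cases hx : x ≤ a + k + 1
      · exact ih x ⟨hax, hx⟩
      have hprev : a ≤ x - 1 := by push_cast at hxk; linarith
      calc h x = h (x - 1 + 1) := by ring_nf
        _ ≤ g (h (x - 1)) := hh _ hprev
        _ ≤ g (f (x - 1)) := hg (ih _ ⟨hprev, by push_cast at hxk; linarith⟩)
        _ ≤ f (x - 1 + 1) := hf _ hprev
        _ = f x := by ring_nf
  intro x hx
  obtain ⟨k, hk⟩ := exists_nat_ge (x - a)
  exact hstep k x ⟨hx, by linarith⟩

theorem eventually_lt_exp_sub (c : ℝ) : ∀ᶠ x in atTop, x < exp (x - c) := by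
  have hratio : Tendsto (fun x => exp x / x) atTop atTop := by
    simpa using tendsto_exp_div_pow_atTop 1
  filter_upwards [hratio.eventually_gt_atTop (exp c), eventually_gt_atTop 0] with x hx hpos
  rw [lt_div_iff₀ hpos] at hx
  rw [exp_sub, lt_div_iff₀ (exp_pos c)]
  linarith

theorem eq_exp_sub_one_of_kneser {E : ℝ → ℝ}
    (hK : ∀ x : ℝ, 0 ≤ x → E (x + 1) = exp (E x)) {x : ℝ} (hx : 1 ≤ x) :
    E x = exp (E (x - 1)) := by
  simpa using hK (x - 1) (by linarith)

theorem one_le_of_kneser {E : ℝ → ℝ}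
    (hK : ∀ x : ℝ, 0 ≤ x → E (x + 1) = exp (E x)) {x : ℝ} (hx : 2 ≤ x) :
    1 ≤ E x := by
  rw [eq_exp_sub_one_of_kneser hK (by linarith : 1 ≤ x),
    eq_exp_sub_one_of_kneser hK (by linarith : 1 ≤ x - 1)]
  exact one_le_exp (exp_pos _).le

theorem exp_sub_three_le_of_kneser {E : ℝ → ℝ}
    (hK : ∀ x : ℝ, 0 ≤ x → E (x + 1) = exp (E x)) {x : ℝ} (hx : 2 ≤ x) :
    exp (x - 3) ≤ E x := by
  refine le_on_Ici_of_le_on_Icc (h := fun y => exp (y - 3)) exp_monotone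
    (fun y hy => (hK y (by linarith)).ge)
    (fun y _ => exp_le_exp.mpr (by linarith [add_one_le_exp (y - 3)])) (fun y hy => ?_) x hx
  calc exp (y - 3) ≤ 1 := exp_le_one_iff.mpr (by linarith [hy.2])
    _ ≤ E y := one_le_of_kneser hK hy.1

theorem transexponential_of_kneser_general (E : ℝ → ℝ)
    (hK : ∀ x : ℝ, 0 ≤ x → E (x + 1) = Real.exp (E x)) :
    ∀ n : ℕ, ∀ᶠ x : ℝ in atTop, Real.exp^[n] x < E x := by
  intro n
  filter_upwards [eventually_ge_atTop ((n : ℝ) + 2), eventually_lt_exp_sub (n + 3)]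
    with x hx hlt
  calc exp^[n] x < exp^[n] (exp (x - n - 3)) :=
        (exp_strictMono.iterate n) (by rwa [sub_sub])
    _ ≤ exp^[n] (E (x - n)) :=
        (exp_monotone.iterate n) (exp_sub_three_le_of_kneser hK (by linarith))
    _ = E x := by rw [← apply_add_natCast_eq_iterate hK n (by linarith), sub_add_cancel]

/-- Any monotone solution of the Kneser difference equation
`E (x + 1) = exp (E x)` tending to `+∞` is transexponential: it eventually
dominates every compositional iterate of `exp`. -/
theorem transexponential_of_kneser (E : ℝ → ℝ)
    (hmono : MonotoneOn E (Set.Ici (0 : ℝ)))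
    (hK : ∀ x : ℝ, 0 ≤ x → E (x + 1) = Real.exp (E x))
    (htop : Tendsto E atTop atTop) :
    ∀ n : ℕ, ∀ᶠ x : ℝ in atTop, Real.exp^[n] x < E x :=
  transexponential_of_kneser_general E hK
end

section
/- Let g, h : ℝ → ℝ be continuous with g(x) > 0 and h(x) > 0 for all sufficiently large x, suppose h(x) → +∞ as x → +∞, and suppose that for all sufficiently large x both h(x+1) > 2·h(x) and |g(x+1) − g(x)| ≤ h(x+1). Then |g(x)| < 3·h(x) for all sufficiently large x. -/
open Filter

/-- Boshernitzan's comparison lemma: if `h (x+1) > 2 * h x` and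
`|g (x+1) - g x| ≤ h (x+1)` eventually, with `g, h` continuous, eventually
positive and `h → +∞`, then `|g x| < 3 * h x` eventually. -/
theorem boshernitzan_growth_lemma (g h : ℝ → ℝ)
    (hg : Continuous g) (hh : Continuous h)
    (hgpos : ∀ᶠ x : ℝ in atTop, 0 < g x)
    (hhpos : ∀ᶠ x : ℝ in atTop, 0 < h x)
    (htop : Tendsto h atTop atTop)
    (hdouble : ∀ᶠ x : ℝ in atTop, 2 * h x < h (x + 1))
    (hdiff : ∀ᶠ x : ℝ in atTop, |g (x + 1) - g x| ≤ h (x + 1)) :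
    ∀ᶠ x : ℝ in atTop, |g x| < 3 * h x := by
  obtain ⟨X, hX⟩ : ∃ X : ℝ, ∀ y ≥ X, 0 < h y ∧ 2 * h y < h (y + 1) ∧
      |g (y + 1) - g y| ≤ h (y + 1) := by
    have := (hhpos.and (hdouble.and hdiff)).exists_forall_of_atTop
    obtain ⟨X, hX⟩ := this
    exact ⟨X, fun y hy => ⟨(hX y hy).1, (hX y hy).2.1, (hX y hy).2.2⟩⟩
  -- key induction
  have key : ∀ n : ℕ, ∀ y : ℝ, X ≤ y → |g (y + n)| ≤ |g y| + 2 * h (y + n) := by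
    intro n
    induction n with
    | zero =>
      intro y hy
      simp only [Nat.cast_zero, add_zero]
      have := (hX y hy).1
      linarith
    | succ n ih =>
      intro y hy
      have hyn : X ≤ y + n := le_add_of_le_of_nonneg hy (Nat.cast_nonneg n)
      obtain ⟨_, hdob, hdif⟩ := hX (y + n) hyn
      have h1 : |g (y + n + 1)| - |g (y + n)| ≤ |g (y + n + 1) - g (y + n)| :=
        abs_sub_abs_le_abs_sub _ _
      have h2 := ih y hy
      have heq : y + (n + 1 : ℕ) = y + n + 1 := by push_cast; ring
      rw [heq]
      linarith
  -- bound g on [X, X+1]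
  obtain ⟨M, hM⟩ : ∃ M : ℝ, ∀ y ∈ Set.Icc X (X + 1), |g y| ≤ M := by
    obtain ⟨M, hM⟩ := (isCompact_Icc (a := X) (b := X + 1)).exists_bound_of_continuousOn
      hg.continuousOn
    exact ⟨M, fun y hy => hM y hy⟩
  filter_upwards [htop.eventually_gt_atTop M, eventually_ge_atTop X] with x hM' hx
  set n : ℕ := ⌊x - X⌋₊ with hn
  have h0 : (0:ℝ) ≤ x - X := by linarith
  have hfl : (n : ℝ) ≤ x - X := Nat.floor_le h0
  have hfl' : x - X < n + 1 := Nat.lt_floor_add_one _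
  set y : ℝ := x - n with hy
  have hyX : X ≤ y := by simp only [hy]; linarith
  have hyX1 : y ≤ X + 1 := by simp only [hy]; linarith
  have hxy : x = y + n := by simp [hy]
  have hk := key n y hyX
  rw [← hxy] at hk
  have hMy : |g y| ≤ M := hM y ⟨hyX, hyX1⟩
  linarith
end

section
/- Let E : ℝ → ℝ be continuously differentiable, satisfy the Kneser difference equation E(x+1) = Real.exp (E x) for all x ≥ 0, tend to +∞ as x → +∞, and have deriv E x > 0 for all sufficiently large x. Then deriv E (x+1) = E(x+1) · deriv E x for all x ≥ 0, and E(x) / deriv E x → 0 as x → +∞ (so E'(x) > E(x) for all sufficiently large x). -/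
open Filter

/-!
Differentiating `E (x + 1) = exp (E x)` gives `E' (x + 1) = E (x + 1) E' x`, so where `E' > 0`
the function `log E'` grows by `E x` over each unit step. Since `E → ∞`, the increments of
`log E'` are eventually at least `1`, hence `E' → ∞`, and `E x / E' x = 1 / E' (x - 1) → 0`.
-/

open Set

theorem deriv_add_one_eq_mul_deriv_of_exp {E : ℝ → ℝ} (hd : Differentiable ℝ E)
    (hK : ∀ x : ℝ, 0 ≤ x → E (x + 1) = Real.exp (E x)) {x : ℝ} (hx : 0 ≤ x) :
    deriv E (x + 1) = E (x + 1) * deriv E x := by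
  have hshift : HasDerivAt (fun y => E (y + 1)) (deriv E (x + 1)) x := by
    simpa using (hd (x + 1)).hasDerivAt.comp_add_const x 1
  -- At `x = 0` the equation only holds on one side, so compare derivatives within `Ici 0`.
  have hexp : HasDerivWithinAt (fun y => E (y + 1)) (Real.exp (E x) * deriv E x) (Ici 0) x :=
    ((Real.hasDerivAt_exp (E x)).comp x (hd x).hasDerivAt).hasDerivWithinAt.congr
      (fun y hy => hK y hy) (hK x hx)
  have hu : UniqueDiffWithinAt ℝ (Ici (0 : ℝ)) x := uniqueDiffOn_Ici 0 x hx
  rw [← hshift.hasDerivWithinAt.derivWithin hu, hexp.derivWithin hu, hK x hx]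

theorem tendsto_atTop_of_add_le_comp_add_one {g : ℝ → ℝ} {N c : ℝ} (hc : 0 < c)
    (hg : ContinuousOn g (Icc N (N + 1))) (hstep : ∀ x, N ≤ x → g x + c ≤ g (x + 1)) :
    Tendsto g atTop atTop := by
  obtain ⟨B, hB⟩ := (isCompact_Icc.bddBelow_image hg : BddBelow (g '' Icc N (N + 1)))
  have hiter : ∀ n : ℕ, ∀ x ∈ Icc N (N + 1), B + n * c ≤ g (x + n) := by
    intro n x hx
    induction n with
    | zero => simpa using hB (mem_image_of_mem g hx)
    | succ n ih =>
      have := hstep (x + n) (by linarith [hx.1, n.cast_nonneg (α := ℝ)])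
      push_cast
      rw [← add_assoc]
      linarith
  have hlin : Tendsto (fun y => B + (y - N - 1) * c) atTop atTop :=
    tendsto_atTop_add_const_left _ B <|
      (tendsto_atTop_add_const_right _ (-N - 1) tendsto_id).atTop_mul_const hc |>.congr
        fun y => by simp only [id_eq]; ring
  refine tendsto_atTop_mono' atTop ?_ hlin
  filter_upwards [eventually_ge_atTop N] with y hy
  set n := ⌊y - N⌋₊
  have hn_le : (n : ℝ) ≤ y - N := Nat.floor_le (by linarith)
  have hn_gt : y - N < n + 1 := Nat.lt_floor_add_one _
  have := hiter n (y - n) ⟨by linarith, by linarith⟩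
  rw [sub_add_cancel] at this
  nlinarith

theorem tendsto_deriv_atTop_of_exp {E : ℝ → ℝ} (hE : ContDiff ℝ 1 E)
    (hK : ∀ x : ℝ, 0 ≤ x → E (x + 1) = Real.exp (E x)) (htop : Tendsto E atTop atTop)
    (hpos : ∀ᶠ x : ℝ in atTop, 0 < deriv E x) :
    Tendsto (deriv E) atTop atTop := by
  obtain ⟨N, hN⟩ := eventually_atTop.mp
    (hpos.and ((htop.eventually_ge_atTop 1).and (eventually_ge_atTop 0)))
  have hlog : Tendsto (fun x => Real.log (deriv E x)) atTop atTop := by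
    refine tendsto_atTop_of_add_le_comp_add_one one_pos (N := N) ?_ fun x hx => ?_
    · exact ((hE.continuous_deriv le_rfl).continuousOn).log
        fun x hx => (hN x hx.1).1.ne'
    · obtain ⟨hd, hE1, hx0⟩ := hN x hx
      rw [deriv_add_one_eq_mul_deriv_of_exp (hE.differentiable one_ne_zero) hK hx0, hK x hx0,
        Real.log_mul (Real.exp_pos _).ne' hd.ne', Real.log_exp]
      linarith
  refine (Real.tendsto_exp_atTop.comp hlog).congr' ?_
  filter_upwards [eventually_ge_atTop N] with x hx
  exact Real.exp_log (hN x hx).1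

/-- For a `C¹` solution of the Kneser difference equation tending to `+∞`
with eventually positive derivative: `E' (x+1) = E (x+1) * E' x` for `x ≥ 0`,
and `E x / E' x → 0` (so `E' x > E x` eventually). -/
theorem kneser_deriv_difference_equation (E : ℝ → ℝ)
    (hE : ContDiff ℝ 1 E)
    (hK : ∀ x : ℝ, 0 ≤ x → E (x + 1) = Real.exp (E x))
    (htop : Tendsto E atTop atTop)
    (hpos : ∀ᶠ x : ℝ in atTop, 0 < deriv E x) :
    (∀ x : ℝ, 0 ≤ x → deriv E (x + 1) = E (x + 1) * deriv E x) ∧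
      Tendsto (fun x : ℝ => E x / deriv E x) atTop (nhds 0) ∧
      ∀ᶠ x : ℝ in atTop, E x < deriv E x := by
  have hrec : ∀ x : ℝ, 0 ≤ x → deriv E (x + 1) = E (x + 1) * deriv E x :=
    fun x => deriv_add_one_eq_mul_deriv_of_exp (hE.differentiable one_ne_zero) hK
  have hshift : Tendsto (fun x => deriv E (x - 1)) atTop atTop :=
    (tendsto_deriv_atTop_of_exp hE hK htop hpos).comp
      (tendsto_atTop_add_const_right _ (-1) tendsto_id)
  have hratio : Tendsto (fun x => E x / deriv E x) atTop (nhds 0) := by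
    refine hshift.inv_tendsto_atTop.congr' ?_
    filter_upwards [eventually_ge_atTop 1, htop.eventually_gt_atTop 0] with x hx hEx
    have := hrec (x - 1) (by linarith)
    rw [sub_add_cancel] at this
    rw [Pi.inv_apply, this, div_mul_cancel_left₀ hEx.ne']
  refine ⟨hrec, hratio, ?_⟩
  filter_upwards [hratio.eventually (gt_mem_nhds one_pos), hpos] with x hlt hd
  exact (div_lt_one hd).mp hlt
end

section
/- Let E : ℝ → ℝ be continuously differentiable, satisfy the Kneser difference equation E(x+1) = Real.exp (E x) for all x ≥ 0, tend to +∞ as x → +∞, and have deriv E x > 0 for all sufficiently large x. Then deriv E x < (E x)^3 for all sufficiently large x. -/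
/-!
Differentiating `E (x + 1) = exp (E x)` gives `E' (x + 1) = exp (E x) * E' x`, so the ratio
`h = E' / E ^ 3` satisfies `h (x + 1) = E x ^ 3 * exp (-2 * E x) * h x`. The factor tends to `0`
because `E → ∞`, so `h` is bounded on a half-line by its maximum on one period and then tends to
`0`; in particular `h < 1` eventually.
-/

open Filter Set Topology

theorem le_of_forall_mem_Icc_le_of_map_add_one_le {f : ℝ → ℝ} {a M : ℝ}
    (hbase : ∀ x ∈ Icc a (a + 1), f x ≤ M) (hstep : ∀ x, a ≤ x → f (x + 1) ≤ f x)
    {x : ℝ} (hx : a ≤ x) : f x ≤ M := by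
  obtain ⟨n, hn⟩ := exists_nat_ge (x - a)
  induction n generalizing x with
  | zero => exact hbase x ⟨hx, by push_cast at hn; linarith⟩
  | succ n ih =>
    rcases le_or_gt x (a + 1) with hx1 | hx1
    · exact hbase x ⟨hx, hx1⟩
    · calc f x = f (x - 1 + 1) := by rw [sub_add_cancel]
        _ ≤ f (x - 1) := hstep _ (by linarith)
        _ ≤ M := ih (by linarith) (by push_cast at hn; linarith)

theorem tendsto_nhds_zero_of_map_add_one_le_mul {f c : ℝ → ℝ} {a : ℝ}
    (hf : ContinuousOn f (Ici a)) (hf₀ : ∀ x, a ≤ x → 0 ≤ f x)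
    (hc : Tendsto c atTop (𝓝 0)) (hstep : ∀ x, a ≤ x → f (x + 1) ≤ c x * f x) :
    Tendsto f atTop (𝓝 0) := by
  obtain ⟨b, hb⟩ := eventually_atTop.1 ((hc.eventually (ge_mem_nhds one_pos)).and
    (eventually_ge_atTop a))
  obtain ⟨z, -, hz⟩ := isCompact_Icc.exists_isMaxOn (nonempty_Icc.2 (by linarith : b ≤ b + 1))
    (hf.mono fun y hy => le_trans (hb b le_rfl).2 hy.1)
  have hbound : ∀ x, b ≤ x → f x ≤ f z := fun x hx =>
    le_of_forall_mem_Icc_le_of_map_add_one_le (fun y hy => hz hy)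
      (fun y hy => (hstep y (hb y hy).2).trans
        (mul_le_of_le_one_left (hf₀ y (hb y hy).2) (hb y hy).1)) hx
  have hshift : Tendsto (fun x => f (x + 1)) atTop (𝓝 0) := by
    refine squeeze_zero' ?_ ?_ (by simpa using hc.abs.mul_const (f z))
    · filter_upwards [eventually_ge_atTop a] with x hx using hf₀ _ (by linarith)
    · filter_upwards [eventually_ge_atTop b] with x hx
      calc f (x + 1) ≤ c x * f x := hstep x (hb x hx).2
        _ ≤ |c x| * f x := mul_le_mul_of_nonneg_right (le_abs_self _) (hf₀ x (hb x hx).2)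
        _ ≤ |c x| * f z := mul_le_mul_of_nonneg_left (hbound x hx) (abs_nonneg _)
  refine (hshift.comp (tendsto_atTop_add_const_right atTop (-1) tendsto_id)).congr fun x => ?_
  simp

theorem tendsto_pow_mul_exp_neg_two_mul_atTop_nhds_zero (n : ℕ) :
    Tendsto (fun t : ℝ => t ^ n * Real.exp (-2 * t)) atTop (𝓝 0) := by
  have h := (Real.tendsto_pow_mul_exp_neg_atTop_nhds_zero n).mul
    Real.tendsto_exp_neg_atTop_nhds_zero
  rw [mul_zero] at h
  refine h.congr fun t => ?_
  rw [mul_assoc, ← Real.exp_add]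
  ring_nf

theorem deriv_add_one_eq_exp_mul {E : ℝ → ℝ} {x : ℝ} (hx : DifferentiableAt ℝ E x)
    (hK : (fun y => E (y + 1)) =ᶠ[𝓝 x] fun y => Real.exp (E y)) :
    deriv E (x + 1) = Real.exp (E x) * deriv E x := by
  rw [← deriv_comp_add_const, hK.deriv_eq, deriv_exp hx]

theorem tendsto_deriv_div_pow_three_of_kneser (E : ℝ → ℝ) (hE : ContDiff ℝ 1 E)
    (hK : ∀ x : ℝ, 0 ≤ x → E (x + 1) = Real.exp (E x)) (htop : Tendsto E atTop atTop)
    (hpos : ∀ᶠ x : ℝ in atTop, 0 < deriv E x) :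
    Tendsto (fun x => deriv E x / E x ^ 3) atTop (𝓝 0) := by
  obtain ⟨a, ha⟩ := eventually_atTop.1
    ((hpos.and (htop.eventually_gt_atTop 0)).and (eventually_gt_atTop 0))
  have hstep : ∀ x, a ≤ x → deriv E (x + 1) / E (x + 1) ^ 3
      = E x ^ 3 * Real.exp (-2 * E x) * (deriv E x / E x ^ 3) := by
    intro x hx
    have hEx : E x ≠ 0 := (ha x hx).1.2.ne'
    rw [deriv_add_one_eq_exp_mul ((hE.differentiable one_ne_zero) x)
      ((eventually_gt_nhds (ha x hx).2).mono fun y hy => hK y hy.le), hK x (ha x hx).2.le,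
      show Real.exp (-2 * E x) = (Real.exp (E x) ^ 2)⁻¹ by
        rw [← Real.exp_nat_mul, ← Real.exp_neg]; ring_nf]
    field_simp
  refine tendsto_nhds_zero_of_map_add_one_le_mul ?_ (fun x hx => ?_)
    ((tendsto_pow_mul_exp_neg_two_mul_atTop_nhds_zero 3).comp htop) (fun x hx => (hstep x hx).le)
  · exact ((hE.continuous_deriv le_rfl).continuousOn).div (hE.continuous.pow 3).continuousOn
      fun x hx => pow_ne_zero 3 (ha x hx).1.2.ne'
  · exact div_nonneg (ha x hx).1.1.le (pow_pos (ha x hx).1.2 3).le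

/-- For a `C¹` solution of the Kneser difference equation tending to `+∞`
with eventually positive derivative, `E' x < (E x) ^ 3` eventually. -/
theorem kneser_deriv_lt_cube (E : ℝ → ℝ)
    (hE : ContDiff ℝ 1 E)
    (hK : ∀ x : ℝ, 0 ≤ x → E (x + 1) = Real.exp (E x))
    (htop : Tendsto E atTop atTop)
    (hpos : ∀ᶠ x : ℝ in atTop, 0 < deriv E x) :
    ∀ᶠ x : ℝ in atTop, deriv E x < E x ^ 3 := by
  filter_upwards [(tendsto_deriv_div_pow_three_of_kneser E hE hK htop hpos).eventually
    (gt_mem_nhds one_pos), htop.eventually_gt_atTop 0] with x hlt hEx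
  rwa [div_lt_one (pow_pos hEx 3)] at hlt
end

section
/- Let E : ℝ → ℝ be continuous and strictly increasing on [0, ∞), satisfy the Kneser difference equation E(x+1) = Real.exp (E x) for all x ≥ 0, and tend to +∞ as x → +∞. Then for every m ∈ ℕ and every real r > 0, E(x−r)^m / E(x) → 0 as x → +∞. -/
/-!
Write `δ y = E y - E (y - r)`. The equation gives
`δ (y + 1) = exp (E y) - exp (E (y - r)) ≥ δ y * exp (E (y - r))`,
so once `E (y - r) ≥ 0` the positive minimum of `δ` on a unit interval (compactness and
strict monotonicity) propagates to a uniform lower bound `c`, and then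
`δ y ≥ c * exp (E (y - 1 - r)) → ∞`. Finally
`E x - m * E (x - r) = exp (E (x - 1 - r)) * (exp (δ (x - 1)) - m) → ∞`, and
`E (x - r) ^ m / E x = exp (m * E (x - 1 - r) - E (x - 1))`.
-/

open Filter Real Set

theorem tendsto_sub_const_atTop (c : ℝ) : Tendsto (fun x => x - c) atTop atTop :=
  tendsto_atTop_add_const_right atTop (-c) tendsto_id

theorem Real.sub_mul_exp_le_exp_sub_exp (a b : ℝ) : (b - a) * exp a ≤ exp b - exp a := by
  have h := mul_le_mul_of_nonneg_right (add_one_le_exp (b - a)) (exp_nonneg a)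
  rw [← exp_add, sub_add_cancel] at h
  linarith

theorem forall_ge_of_forall_Ico_of_add_one {p : ℝ → Prop} {a : ℝ}
    (hbase : ∀ y ∈ Ico a (a + 1), p y) (hstep : ∀ y, a ≤ y → p y → p (y + 1)) :
    ∀ y, a ≤ y → p y := by
  suffices h : ∀ n : ℕ, ∀ y ∈ Ico (a + n) (a + n + 1), p y by
    intro y hy
    apply h ⌊y - a⌋₊
    constructor <;> linarith [Nat.floor_le (sub_nonneg.2 hy), Nat.lt_floor_add_one (y - a)]
  intro n
  induction n with
  | zero => simpa using hbase
  | succ n ih =>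
    intro y ⟨hy₁, hy₂⟩
    push_cast at hy₁ hy₂
    have h := hstep (y - 1) (by linarith [n.cast_nonneg (α := ℝ)])
      (ih (y - 1) ⟨by linarith, by linarith⟩)
    rwa [sub_add_cancel] at h

theorem StrictMonoOn.exists_pos_le_sub_shift {f : ℝ → ℝ} (hcont : ContinuousOn f (Ici 0))
    (hmono : StrictMonoOn f (Ici 0)) {r a b : ℝ} (hr : 0 < r) (ha : r ≤ a) :
    ∃ c > 0, ∀ y ∈ Icc a b, c ≤ f y - f (y - r) := by
  have hcont' : ContinuousOn (fun y => f y - f (y - r)) (Icc a b) :=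
    (hcont.mono fun y hy => show 0 ≤ y by linarith [hy.1]).sub
      (hcont.comp (continuous_sub_right r).continuousOn fun y hy =>
        show 0 ≤ y - r by linarith [hy.1])
  refine isCompact_Icc.exists_forall_le' hcont' fun y hy => sub_pos.2 ?_
  exact hmono (show 0 ≤ y - r by linarith [hy.1]) (show 0 ≤ y by linarith [hy.1])
    (by linarith)

section Kneser

variable {E : ℝ → ℝ} {r : ℝ}

theorem kneser_eq_exp_sub_one (hK : ∀ x : ℝ, 0 ≤ x → E (x + 1) = exp (E x)) {x : ℝ}
    (hx : 1 ≤ x) : E x = exp (E (x - 1)) := by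
  simpa using hK (x - 1) (by linarith)

theorem kneser_sub_shift_mul_exp_le (hK : ∀ x : ℝ, 0 ≤ x → E (x + 1) = exp (E x))
    (hr : 0 ≤ r) {y : ℝ} (hy : r ≤ y) :
    (E y - E (y - r)) * exp (E (y - r)) ≤ E (y + 1) - E (y + 1 - r) := by
  rw [hK y (by linarith), add_sub_right_comm, hK (y - r) (by linarith)]
  exact sub_mul_exp_le_exp_sub_exp _ _

theorem kneser_le_sub_shift_of_le_on_Ico (hK : ∀ x : ℝ, 0 ≤ x → E (x + 1) = exp (E x))
    (hr : 0 ≤ r) {a c : ℝ} (ha : r ≤ a) (hc : 0 ≤ c) (hE : ∀ y, a - r ≤ y → 0 ≤ E y)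
    (hbase : ∀ y ∈ Ico a (a + 1), c ≤ E y - E (y - r)) :
    ∀ y, a ≤ y → c ≤ E y - E (y - r) :=
  forall_ge_of_forall_Ico_of_add_one hbase fun y hy hcy =>
    calc c ≤ E y - E (y - r) := hcy
      _ ≤ (E y - E (y - r)) * exp (E (y - r)) :=
        le_mul_of_one_le_right (hc.trans hcy) (one_le_exp (hE _ (by linarith)))
      _ ≤ E (y + 1) - E (y + 1 - r) := kneser_sub_shift_mul_exp_le hK hr (by linarith)

theorem kneser_tendsto_sub_shift_atTop (hcont : ContinuousOn E (Ici 0))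
    (hmono : StrictMonoOn E (Ici 0)) (hK : ∀ x : ℝ, 0 ≤ x → E (x + 1) = exp (E x))
    (htop : Tendsto E atTop atTop) (hr : 0 < r) :
    Tendsto (fun y => E y - E (y - r)) atTop atTop := by
  obtain ⟨b, hb⟩ := (htop.eventually_ge_atTop 0).exists_forall_of_atTop
  set a := max b 0 + r
  have ha : r ≤ a := by simp [a]
  obtain ⟨c, hc, hbase⟩ := hmono.exists_pos_le_sub_shift hcont hr (b := a + 1) ha
  have hlow := kneser_le_sub_shift_of_le_on_Ico hK hr.le ha hc.le
    (fun y hy => hb y (by linarith [le_max_left b 0]))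
    fun y hy => hbase y (Ico_subset_Icc_self hy)
  have hE : Tendsto (fun y => E (y - 1 - r)) atTop atTop :=
    htop.comp ((tendsto_sub_const_atTop r).comp (tendsto_sub_const_atTop 1))
  refine tendsto_atTop_mono' _ ?_ ((tendsto_exp_atTop.comp hE).const_mul_atTop hc)
  filter_upwards [eventually_ge_atTop (a + 1)] with y hy
  have h := kneser_sub_shift_mul_exp_le hK hr.le (y := y - 1) (by linarith)
  rw [sub_add_cancel] at h
  exact (mul_le_mul_of_nonneg_right (hlow _ (by linarith)) (exp_nonneg _)).trans h

theorem kneser_tendsto_sub_mul_shift_atTop (hcont : ContinuousOn E (Ici 0))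
    (hmono : StrictMonoOn E (Ici 0)) (hK : ∀ x : ℝ, 0 ≤ x → E (x + 1) = exp (E x))
    (htop : Tendsto E atTop atTop) (hr : 0 < r) (m : ℝ) :
    Tendsto (fun y => E y - m * E (y - r)) atTop atTop := by
  have hδ := (kneser_tendsto_sub_shift_atTop hcont hmono hK htop hr).comp
    (tendsto_sub_const_atTop 1)
  have h₁ : Tendsto (fun y => exp (E (y - 1 - r))) atTop atTop :=
    tendsto_exp_atTop.comp
      (htop.comp ((tendsto_sub_const_atTop r).comp (tendsto_sub_const_atTop 1)))
  have h₂ : Tendsto (fun y => exp (E (y - 1) - E (y - 1 - r)) - m) atTop atTop :=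
    tendsto_atTop_add_const_right atTop (-m) (tendsto_exp_atTop.comp hδ)
  refine (h₁.atTop_mul_atTop₀ h₂).congr' ?_
  filter_upwards [eventually_ge_atTop (1 + r)] with y hy
  rw [kneser_eq_exp_sub_one hK (x := y) (by linarith),
    kneser_eq_exp_sub_one hK (x := y - r) (by linarith), sub_right_comm, exp_sub]
  field_simp

end Kneser

/-- For a continuous, strictly increasing solution of the Kneser difference
equation tending to `+∞`: for every `m : ℕ` and `r > 0`,
`E (x - r) ^ m / E x → 0` as `x → +∞`. -/
theorem kneser_shift_pow_div_tendsto_zero (E : ℝ → ℝ)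
    (hcont : ContinuousOn E (Set.Ici (0 : ℝ)))
    (hmono : StrictMonoOn E (Set.Ici (0 : ℝ)))
    (hK : ∀ x : ℝ, 0 ≤ x → E (x + 1) = Real.exp (E x))
    (htop : Tendsto E atTop atTop) :
    ∀ m : ℕ, ∀ r : ℝ, 0 < r →
      Tendsto (fun x : ℝ => E (x - r) ^ m / E x) atTop (nhds 0) := by
  intro m r hr
  have h := (kneser_tendsto_sub_mul_shift_atTop hcont hmono hK htop hr m).comp
    (tendsto_sub_const_atTop 1)
  refine (tendsto_exp_neg_atTop_nhds_zero.comp h).congr' ?_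
  filter_upwards [eventually_ge_atTop (1 + r)] with x hx
  rw [kneser_eq_exp_sub_one hK (x := x) (by linarith),
    kneser_eq_exp_sub_one hK (x := x - r) (by linarith), sub_right_comm, ← exp_nat_mul,
    ← exp_sub]
  simp [sub_eq_add_neg, add_comm]
end

section
/- Fix d ≥ 1 and let E : ℝ → ℝ be d-times continuously differentiable, continuous and strictly increasing on [0, ∞), satisfy the Kneser difference equation E(x+1) = Real.exp (E x) for all x ≥ 0, and tend to +∞ as x → +∞. Assume iteratedDeriv d E x > 0 for all sufficiently large x, iteratedDeriv d E tends to +∞ at +∞, and Boshernitzan's bound holds: iteratedDeriv d E x < E(x) · E(x−1)^(3d) for all sufficiently large x. Then for every real number a and every real r > 0, (iteratedDeriv d E (x−r))^a / E(x) → 0 as x → +∞; in particular (iteratedDeriv d E (x−r))^a < E(x) for all sufficiently large x. -/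
open Filter

lemma lemA (E : ℝ → ℝ) (hEc : Continuous E)
    (hmono : StrictMonoOn E (Set.Ici (0 : ℝ)))
    (hK : ∀ x : ℝ, 0 ≤ x → E (x + 1) = Real.exp (E x))
    (htop : Tendsto E atTop atTop) (r : ℝ) (hr : 0 < r) :
    Tendsto (fun y => E y - E (y - r)) atTop atTop := by
  obtain ⟨M, hM⟩ := (htop.eventually_ge_atTop 0).exists_forall_of_atTop
  set T : ℝ := max (r + 2) (M + 1 + r) with hT
  have hTr : r + 2 ≤ T := le_max_left _ _
  have hTM : M + 1 + r ≤ T := le_max_right _ _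
  set G : ℝ → ℝ := fun y => E y - E (y - r) with hG
  have hGc : Continuous G := hEc.sub (hEc.comp (continuous_id.sub continuous_const))
  -- min on [T, T+1]
  obtain ⟨y₀, hy₀mem, hy₀min⟩ := (isCompact_Icc (a := T) (b := T + 1)).exists_isMinOn
    (Set.nonempty_Icc.2 (by linarith)) hGc.continuousOn
  set δ := G y₀ with hδ
  have hδpos : 0 < δ := by
    have h1 : (0:ℝ) ≤ y₀ - r := by
      have := hy₀mem.1; linarith
    have h2 : y₀ - r < y₀ := by linarith
    have := hmono h1 (by linarith : (0:ℝ) ≤ y₀) h2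
    simpa [hδ, hG] using this
  -- key step inequality
  have key : ∀ y : ℝ, T + 1 ≤ y → Real.exp (E (y - 1 - r)) * G (y - 1) ≤ G y := by
    intro y hy
    have h1 : (0:ℝ) ≤ y - 1 := by linarith
    have h2 : (0:ℝ) ≤ y - r - 1 := by linarith
    have e1 : E y = Real.exp (E (y - 1)) := by
      have := hK (y - 1) h1; rw [← this]; ring_nf
    have e2 : E (y - r) = Real.exp (E (y - r - 1)) := by
      have := hK (y - r - 1) h2; rw [← this]; ring_nf
    set A := E (y - 1)
    set B := E (y - r - 1)
    have hAB : Real.exp (A - B) * Real.exp B = Real.exp A := by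
      rw [← Real.exp_add]; ring_nf
    have h3 : A - B + 1 ≤ Real.exp (A - B) := Real.add_one_le_exp _
    have hBpos := Real.exp_pos B
    have : Real.exp B * (A - B) ≤ Real.exp A - Real.exp B := by nlinarith
    have heq : y - 1 - r = y - r - 1 := by ring
    have hmain : Real.exp B * (A - B) ≤ Real.exp A - Real.exp B := by nlinarith
    simp only [hG, heq, e1, e2]
    exact hmain
  -- δ ≤ G y for all y ≥ T
  have lower : ∀ y : ℝ, T ≤ y → δ ≤ G y := by
    have claim : ∀ n : ℕ, ∀ y : ℝ, T ≤ y → y ≤ T + 1 + n → δ ≤ G y := by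
      intro n
      induction n with
      | zero => intro y h1 h2
                exact hy₀min ⟨h1, by push_cast at h2; linarith⟩
      | succ n ih =>
        intro y h1 h2
        by_cases hcase : y ≤ T + 1 + n
        · exact ih y h1 hcase
        · push_neg at hcase
          have hy : T + 1 ≤ y := by
            have : (0:ℝ) ≤ (n:ℝ) := Nat.cast_nonneg n
            linarith
          have hGy1 : δ ≤ G (y - 1) := by
            apply ih
            · linarith
            · push_cast at h2 ⊢; linarith
          have hEnn : (0:ℝ) ≤ E (y - 1 - r) := hM _ (by linarith)
          have hexp : (1:ℝ) ≤ Real.exp (E (y - 1 - r)) := Real.one_le_exp hEnn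
          have := key y hy
          nlinarith
    intro y hy
    refine claim ⌈y - T⌉₊ y hy ?_
    have := Nat.le_ceil (y - T)
    linarith
  -- conclude
  have hlow : ∀ᶠ y in atTop, Real.exp (E (y - 1 - r)) * δ ≤ G y := by
    filter_upwards [eventually_ge_atTop (T + 1)] with y hy
    have h1 := key y hy
    have h2 := lower (y - 1) (by linarith)
    have := Real.exp_pos (E (y - 1 - r))
    nlinarith
  have htend : Tendsto (fun y => Real.exp (E (y - 1 - r)) * δ) atTop atTop := by
    apply Tendsto.atTop_mul_const hδpos
    exact Real.tendsto_exp_atTop.comp (htop.comp (tendsto_atTop_add_const_right atTop (-(1 + r)) tendsto_id |>.congr (fun x => by simp only [id_eq]; ring)))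
  exact tendsto_atTop_mono' atTop hlow htend

lemma lemB (E : ℝ → ℝ) (hEc : Continuous E)
    (hmono : StrictMonoOn E (Set.Ici (0 : ℝ)))
    (hK : ∀ x : ℝ, 0 ≤ x → E (x + 1) = Real.exp (E x))
    (htop : Tendsto E atTop atTop) (c r : ℝ) (hr : 0 < r) :
    Tendsto (fun x => E x - c * E (x - r)) atTop atTop := by
  have hA := lemA E hEc hmono hK htop r hr
  have hshift : Tendsto (fun x : ℝ => x - r) atTop atTop :=
    tendsto_atTop_add_const_right atTop (-r) tendsto_id
  rcases le_or_gt c 1 with hc | hc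
  · apply tendsto_atTop_mono' atTop _ hA
    filter_upwards [(htop.comp hshift).eventually_ge_atTop 0] with x hx
    simp only [Function.comp] at hx
    have : c * E (x - r) ≤ E (x - r) := mul_le_of_le_one_left hx hc
    nlinarith
  · have hcpos : (0:ℝ) < c := by linarith
    have hAshift : Tendsto (fun x : ℝ => E (x - 1) - E (x - 1 - r)) atTop atTop := by
      have := hA.comp (tendsto_atTop_add_const_right atTop (-1) tendsto_id)
      exact this.congr (fun x => by simp only [Function.comp, id_eq]; ring_nf)
    apply tendsto_atTop_mono' atTop _
      (Real.tendsto_exp_atTop.comp (htop.comp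
        (tendsto_atTop_add_const_right atTop (-(1+r)) tendsto_id)))
    filter_upwards [hAshift.eventually_ge_atTop (Real.log c + 1),
      eventually_ge_atTop (r + 2)] with x hx1 hx2
    have h1 : (0:ℝ) ≤ x - 1 := by linarith
    have h2 : (0:ℝ) ≤ x - r - 1 := by linarith
    have e1 : E x = Real.exp (E (x - 1)) := by
      have := hK (x - 1) h1; rw [← this]; ring_nf
    have e2 : E (x - r) = Real.exp (E (x - r - 1)) := by
      have := hK (x - r - 1) h2; rw [← this]; ring_nf
    set A := E (x - 1)
    set B := E (x - r - 1)
    have heq : x - 1 - r = x - r - 1 := by ring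
    rw [heq] at hx1
    have hAB : Real.exp (A - B) * Real.exp B = Real.exp A := by
      rw [← Real.exp_add]; ring_nf
    have h3 : Real.exp (Real.log c + 1) ≤ Real.exp (A - B) := by
      apply Real.exp_le_exp.2; linarith
    have h4 : Real.exp (Real.log c + 1) = c * Real.exp 1 := by
      rw [Real.exp_add, Real.exp_log hcpos]
    have h5 : (2:ℝ) ≤ Real.exp 1 := by
      have := Real.add_one_le_exp (1:ℝ); linarith
    have hBpos := Real.exp_pos B
    have hgoal : Real.exp B ≤ Real.exp A - c * Real.exp B := by
      nlinarith [mul_le_mul_of_nonneg_right h3 hBpos.le, mul_pos hcpos hBpos]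
    simp only [Function.comp, id_eq, e1, e2]
    calc Real.exp (E (x + -(1+r))) = Real.exp B := by norm_num [B]; ring_nf
      _ ≤ Real.exp A - c * Real.exp B := hgoal

lemma lemC (E : ℝ → ℝ) (hEc : Continuous E)
    (hmono : StrictMonoOn E (Set.Ici (0 : ℝ)))
    (hK : ∀ x : ℝ, 0 ≤ x → E (x + 1) = Real.exp (E x))
    (htop : Tendsto E atTop atTop) (c r : ℝ) (hr : 0 < r) :
    Tendsto (fun x => E (x - r) ^ c / E x) atTop (nhds 0) := by
  have hB := (lemB E hEc hmono hK htop c r hr).comp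
    (tendsto_atTop_add_const_right atTop (-1) tendsto_id)
  have hB' : Tendsto (fun x : ℝ => E (x - 1) - c * E (x - 1 - r)) atTop atTop :=
    hB.congr (fun x => by simp only [Function.comp, id_eq]; ring_nf)
  have hexp : Tendsto (fun x : ℝ => Real.exp (-(E (x - 1) - c * E (x - 1 - r))))
      atTop (nhds 0) :=
    Real.tendsto_exp_atBot.comp (tendsto_neg_atTop_atBot.comp hB')
  apply hexp.congr'
  filter_upwards [eventually_ge_atTop (r + 2)] with x hx
  have h1 : (0:ℝ) ≤ x - 1 := by linarith
  have h2 : (0:ℝ) ≤ x - r - 1 := by linarith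
  have e1 : E x = Real.exp (E (x - 1)) := by
    have := hK (x - 1) h1; rw [← this]; ring_nf
  have e2 : E (x - r) = Real.exp (E (x - r - 1)) := by
    have := hK (x - r - 1) h2; rw [← this]; ring_nf
  have heq : x - 1 - r = x - r - 1 := by ring
  simp only [Function.comp, id_eq, heq, e1, e2]
  rw [← Real.exp_log (x := Real.exp (E (x - r - 1)) ^ c) (by positivity),
    Real.log_rpow (Real.exp_pos _), Real.log_exp, ← Real.exp_sub]
  ring_nf

/-- Fourth part of Lemma 2.3: for every real `a` and `r > 0`,
`(E⁽ᵈ⁾ (x - r)) ^ a / E x → 0` as `x → +∞`; in particular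
`(E⁽ᵈ⁾ (x - r)) ^ a < E x` eventually. -/
theorem kneser_iteratedDeriv_shift_rpow_div_tendsto_zero'
    (d : ℕ) (hd : 1 ≤ d) (E : ℝ → ℝ)
    (hE : ContDiff ℝ (d : ℕ∞) E)
    (hcont : ContinuousOn E (Set.Ici (0 : ℝ)))
    (hmono : StrictMonoOn E (Set.Ici (0 : ℝ)))
    (hK : ∀ x : ℝ, 0 ≤ x → E (x + 1) = Real.exp (E x))
    (htop : Tendsto E atTop atTop)
    (hdpos : ∀ᶠ x : ℝ in atTop, 0 < iteratedDeriv d E x)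
    (hdtop : Tendsto (iteratedDeriv d E) atTop atTop)
    (hbound : ∀ᶠ x : ℝ in atTop,
      iteratedDeriv d E x < E x * E (x - 1) ^ (3 * d)) :
    ∀ a : ℝ, ∀ r : ℝ, 0 < r →
      Tendsto (fun x : ℝ => iteratedDeriv d E (x - r) ^ a / E x) atTop (nhds 0) ∧
        ∀ᶠ x : ℝ in atTop, iteratedDeriv d E (x - r) ^ a < E x := by
  have hEc : Continuous E := hE.continuous
  set D := iteratedDeriv d E with hD
  intro a r hr
  have hshift : Tendsto (fun x : ℝ => x - r) atTop atTop :=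
    tendsto_atTop_add_const_right atTop (-r) tendsto_id
  have hshift1 : Tendsto (fun x : ℝ => x - r - 1) atTop atTop :=
    tendsto_atTop_add_const_right atTop (-r - 1) tendsto_id |>.congr
      (fun x => by simp only [id_eq]; ring)
  have hExpos : ∀ᶠ x : ℝ in atTop, (1:ℝ) ≤ E x := htop.eventually_ge_atTop 1
  have htends : Tendsto (fun x : ℝ => D (x - r) ^ a / E x) atTop (nhds 0) := by
    rcases le_or_gt a 0 with ha | ha
    · -- a ≤ 0 : D(x-r)^a ≤ 1
      refine squeeze_zero' ?_ ?_
        ((tendsto_const_nhds.div_atTop htop :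
          Tendsto (fun x : ℝ => (1:ℝ) / E x) atTop (nhds 0)))
      · filter_upwards [(hdtop.comp hshift).eventually_ge_atTop 0,
          htop.eventually_ge_atTop 1] with x h1 h2
        positivity
      · filter_upwards [(hdtop.comp hshift).eventually_ge_atTop 1,
          htop.eventually_ge_atTop 1] with x h1 h2
        simp only [Function.comp] at h1
        have hb : D (x - r) ^ a ≤ 1 :=
          Real.rpow_le_one_of_one_le_of_nonpos h1 ha
        have hEx : (0:ℝ) < E x := by linarith
        gcongr
    · -- 0 < a
      have hc : (0:ℝ) < ((3 * d + 1 : ℕ) : ℝ) * a := by positivity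
      refine squeeze_zero' ?_ ?_
        (lemC E hEc hmono hK htop (((3 * d + 1 : ℕ) : ℝ) * a) r hr)
      · filter_upwards [(hdtop.comp hshift).eventually_ge_atTop 0,
          htop.eventually_ge_atTop 1] with x h1 h2
        simp only [Function.comp] at h1
        positivity
      · filter_upwards [hshift.eventually hbound,
          (htop.comp hshift1).eventually_ge_atTop 0,
          htop.eventually_ge_atTop 1,
          (hdtop.comp hshift).eventually_ge_atTop 0,
          eventually_ge_atTop (r + 1)] with x hb h0 h2 hd0 hx
        simp only [Function.comp] at h0 hd0
        have hmem1 : (0:ℝ) ≤ x - r - 1 := by linarith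
        have hmem2 : (0:ℝ) ≤ x - r := by linarith
        have hle : E (x - r - 1) ≤ E (x - r) :=
          (hmono.monotoneOn) hmem1 hmem2 (by linarith)
        have hEnn : (0:ℝ) ≤ E (x - r) := le_trans h0 hle
        have step1 : D (x - r) ≤ E (x - r) ^ (3 * d + 1) := by
          have : E (x - r - 1) ^ (3 * d) ≤ E (x - r) ^ (3 * d) :=
            pow_le_pow_left₀ h0 hle _
          calc D (x - r) ≤ E (x - r) * E (x - r - 1) ^ (3 * d) := hb.le
            _ ≤ E (x - r) * E (x - r) ^ (3 * d) := by
                exact mul_le_mul_of_nonneg_left this hEnn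
            _ = E (x - r) ^ (3 * d + 1) := by ring
        have step2 : D (x - r) ^ a ≤ (E (x - r) ^ (3 * d + 1)) ^ a :=
          Real.rpow_le_rpow hd0 step1 ha.le
        have step3 : (E (x - r) ^ (3 * d + 1)) ^ a
            = E (x - r) ^ (((3 * d + 1 : ℕ) : ℝ) * a) := by
          rw [← Real.rpow_natCast (E (x - r)) (3 * d + 1), ← Real.rpow_mul hEnn]
        have hEx : (0:ℝ) < E x := by linarith
        have : D (x - r) ^ a ≤ E (x - r) ^ (((3 * d + 1 : ℕ) : ℝ) * a) :=
          step3 ▸ step2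
        gcongr
  refine ⟨htends, ?_⟩
  filter_upwards [htends.eventually_lt_const one_pos, htop.eventually_gt_atTop 0]
    with x h1 h2
  exact (div_lt_one h2).mp h1
end

section
/- Let E : ℝ → ℝ be twice continuously differentiable, satisfy the Kneser difference equation E(x+1) = Real.exp (E x) for all x ≥ 0, tend to +∞ as x → +∞, and suppose deriv E x > 0 and iteratedDeriv 2 E x > 0 for all sufficiently large x, together with Boshernitzan's bound for d = 2: iteratedDeriv 2 E x < E(x) · E(x−1)^6 for all sufficiently large x. Then E(x) · E''(x) / (E'(x))^2 → 1 as x → +∞, where E' = deriv E and E'' = iteratedDeriv 2 E; that is, E·E'' and (E')^2 have equivalent growth rates. -/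
open Filter

/-!
Differentiating the Kneser equation gives `E'(x + 1) = E(x + 1) E'(x)` and
`E''(x + 1) = E(x + 1) (E'(x)² + E''(x))`, so `E E'' / E'²` at `x + 1` equals `1 + E'' / E'²` at `x`.
As `E'' > 0`, `E'` is eventually bounded below by some `m > 0`, and Boshernitzan's bound at `x + 1`
then gives `E'' / E'² (x + 1) ≤ E(x)⁶ e^{-E(x)} / m²`, which tends to `0` because `E → ∞`.
-/

open Real Topology

theorem Filter.tendsto_comp_add_atTop_iff {α β : Type*} [AddCommGroup α] [PartialOrder α]
    [IsOrderedAddMonoid α] [IsDirectedOrder α] {f : α → β} {l : Filter β} (k : α) :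
    Tendsto (fun x => f (x + k)) atTop l ↔ Tendsto f atTop l := by
  change Tendsto (f ∘ fun x => x + k) atTop l ↔ _
  rw [← tendsto_map'_iff, map_add_atTop_eq]

theorem exists_pos_eventually_le_of_deriv_nonneg {f : ℝ → ℝ} (hf : Differentiable ℝ f)
    (hpos : ∀ᶠ x in atTop, 0 < f x) (hmono : ∀ᶠ x in atTop, 0 ≤ deriv f x) :
    ∃ m > 0, ∀ᶠ x in atTop, m ≤ f x := by
  obtain ⟨a, ha⟩ := (hpos.and hmono).exists_forall_of_atTop
  have hf_mono : MonotoneOn f (Set.Ici a) :=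
    monotoneOn_of_deriv_nonneg (convex_Ici a) hf.continuous.continuousOn hf.differentiableOn
      fun x hx => (ha x (interior_subset hx)).2
  exact ⟨f a, (ha a le_rfl).1, (eventually_ge_atTop a).mono fun x hx =>
    hf_mono Set.self_mem_Ici hx hx⟩

section KneserEquation

variable {E : ℝ → ℝ} (hK : ∀ x : ℝ, 0 ≤ x → E (x + 1) = exp (E x))
include hK

theorem deriv_add_one_eq_exp_mul_deriv {x : ℝ} (hx : 0 < x) (hd : DifferentiableAt ℝ E x) :
    deriv E (x + 1) = exp (E x) * deriv E x := by
  have hshift : (fun y => E (y + 1)) =ᶠ[𝓝 x] fun y => exp (E y) :=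
    eventually_gt_nhds hx |>.mono fun y hy => hK y hy.le
  rw [← deriv_comp_add_const, hshift.deriv_eq, deriv_exp hd]

theorem deriv_deriv_add_one_eq {x : ℝ} (hx : 0 < x) (hd : Differentiable ℝ E)
    (hd' : DifferentiableAt ℝ (deriv E) x) :
    deriv (deriv E) (x + 1) = exp (E x) * (deriv E x ^ 2 + deriv (deriv E) x) := by
  have hshift : (fun y => deriv E (y + 1)) =ᶠ[𝓝 x] fun y => exp (E y) * deriv E y :=
    eventually_gt_nhds hx |>.mono fun y hy => deriv_add_one_eq_exp_mul_deriv hK hy (hd y)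
  rw [← deriv_comp_add_const, hshift.deriv_eq, deriv_fun_mul (hd x).exp hd', deriv_exp (hd x)]
  ring

theorem mul_deriv_deriv_div_deriv_sq_add_one {x : ℝ} (hx : 0 < x) (hd : Differentiable ℝ E)
    (hd' : DifferentiableAt ℝ (deriv E) x) (hE' : deriv E x ≠ 0) :
    E (x + 1) * deriv (deriv E) (x + 1) / deriv E (x + 1) ^ 2 =
      1 + deriv (deriv E) x / deriv E x ^ 2 := by
  rw [deriv_deriv_add_one_eq hK hx hd hd', deriv_add_one_eq_exp_mul_deriv hK hx (hd x), hK x hx.le]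
  field_simp

theorem deriv_deriv_add_one_div_deriv_sq_le {x m : ℝ} (hx : 0 < x) (hd : DifferentiableAt ℝ E x)
    (hm : 0 < m) (hmx : m ≤ deriv E x) (hbound : deriv (deriv E) (x + 1) ≤ E (x + 1) * E x ^ 6) :
    deriv (deriv E) (x + 1) / deriv E (x + 1) ^ 2 ≤ E x ^ 6 * exp (-E x) / m ^ 2 := by
  rw [deriv_add_one_eq_exp_mul_deriv hK hx hd]
  rw [hK x hx.le] at hbound
  calc deriv (deriv E) (x + 1) / (exp (E x) * deriv E x) ^ 2
      ≤ exp (E x) * E x ^ 6 / (exp (E x) * deriv E x) ^ 2 := by gcongr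
    _ = E x ^ 6 * exp (-E x) / deriv E x ^ 2 := by
      rw [exp_neg]
      field_simp
    _ ≤ E x ^ 6 * exp (-E x) / m ^ 2 := by gcongr

end KneserEquation

/-- `E * E''` and `(E')²` have equivalent growth rates:
`E x * E'' x / (E' x)² → 1` as `x → +∞`. -/
theorem kneser_EEpp_div_Ep_sq_tendsto_one (E : ℝ → ℝ)
    (hE : ContDiff ℝ 2 E)
    (hK : ∀ x : ℝ, 0 ≤ x → E (x + 1) = Real.exp (E x))
    (htop : Tendsto E atTop atTop)
    (h1 : ∀ᶠ x : ℝ in atTop, 0 < deriv E x)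
    (h2 : ∀ᶠ x : ℝ in atTop, 0 < iteratedDeriv 2 E x)
    (hbound : ∀ᶠ x : ℝ in atTop,
      iteratedDeriv 2 E x < E x * E (x - 1) ^ 6) :
    Tendsto (fun x : ℝ => E x * iteratedDeriv 2 E x / (deriv E x) ^ 2)
      atTop (nhds 1) := by
  have hd : Differentiable ℝ E := hE.differentiable (by norm_num)
  have hd' : Differentiable ℝ (deriv E) := by
    simpa using hE.differentiable_iteratedDeriv 1 (by norm_num)
  rw [iteratedDeriv_succ, iteratedDeriv_one] at h2 hbound ⊢
  obtain ⟨m, hm, hmE⟩ := exists_pos_eventually_le_of_deriv_nonneg hd' h1 (h2.mono fun _ h => h.le)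
  have hlim : Tendsto (fun x => E x ^ 6 * exp (-E x) / m ^ 2) atTop (𝓝 0) := by
    simpa using ((tendsto_pow_mul_exp_neg_atTop_nhds_zero 6).comp htop).div_const (m ^ 2)
  have hratio : Tendsto (fun x => deriv (deriv E) x / deriv E x ^ 2) atTop (𝓝 0) := by
    have hshift := tendsto_atTop_add_const_right atTop (1 : ℝ) tendsto_id
    rw [← tendsto_comp_add_atTop_iff 1]
    refine squeeze_zero' ?_ ?_ hlim
    · filter_upwards [hshift.eventually h2] with x hx using div_nonneg hx.le (sq_nonneg _)
    · filter_upwards [eventually_gt_atTop 0, hmE, hshift.eventually hbound] with x hx hmx hb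
      simp only [id, add_sub_cancel_right] at hb
      exact deriv_deriv_add_one_div_deriv_sq_le hK hx (hd x) hm hmx hb.le
  rw [← tendsto_comp_add_atTop_iff 1]
  have hlim_one : Tendsto (fun x => 1 + deriv (deriv E) x / deriv E x ^ 2) atTop (𝓝 1) := by
    simpa using hratio.const_add 1
  refine hlim_one.congr' ?_
  filter_upwards [eventually_gt_atTop 0, h1] with x hx hx'
  exact (mul_deriv_deriv_div_deriv_sq_add_one hK hx hd (hd' x) hx'.ne').symm
end

section
/- For every natural number n ≥ 1, the derivative of the binomial-coefficient polynomial C(X, n) := (1/n!) · descPochhammer ℝ n (so C(X, n) = X(X−1)⋯(X−n+1)/n!) satisfies, in the polynomial ring ℝ[X]: derivative (C(X, n)) = ∑_{j=0}^{n−1} ((−1)^{n−1−j} / (n−j)) · C(X, j). -/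
/-! Write `B n = C(X, n)`. Since `(n + 1) • B (n + 1) = B n * (X - n)`, differentiating gives
`(n + 1) • B' (n + 1) = B' n * (X - n) + B n`, and `B j * (X - n) = (j + 1) • B (j + 1) - (n - j) • B j`
re-expands the right side in the basis `B j`. Comparing with the claimed coefficients `c (n + 1) j`
comes down to splitting `n + 1 = j + (n + 1 - j)`: the first part matches through the index shift
`c (n + 1) (j + 1) = c n j`, the second through `(n + 1 - j) * c (n + 1) j = (-1) ^ (n - j)`. -/

open Polynomial Finset

section

variable (K : Type*) [Field K]

noncomputable def binomialPoly (n : ℕ) : K[X] := ((n.factorial : K))⁻¹ • descPochhammer K n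

noncomputable def binomialPolyDerivCoeff (n j : ℕ) : K :=
  (-1 : K) ^ (n - 1 - j) / ((n : K) - (j : K))

variable {K}

theorem binomialPolyDerivCoeff_succ_succ (n j : ℕ) :
    binomialPolyDerivCoeff K (n + 1) (j + 1) = binomialPolyDerivCoeff K n j := by
  simp only [binomialPolyDerivCoeff, Nat.cast_succ, add_sub_add_right_eq_sub]
  congr 2
  omega

theorem sub_mul_binomialPolyDerivCoeff [CharZero K] {n j : ℕ} (h : j < n) :
    ((n : K) - j) * binomialPolyDerivCoeff K n j = (-1) ^ (n - 1 - j) :=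
  mul_div_cancel₀ _ (sub_ne_zero.mpr (Nat.cast_injective.ne h.ne'))

theorem smul_binomialPoly_succ [CharZero K] (n : ℕ) :
    ((n : K) + 1) • binomialPoly K (n + 1) = binomialPoly K n * (X - C (n : K)) := by
  rw [binomialPoly, binomialPoly, descPochhammer_succ_right, smul_smul, smul_mul_assoc,
    Nat.factorial_succ, Nat.cast_mul, Nat.cast_succ, mul_inv, ← mul_assoc,
    mul_inv_cancel₀ n.cast_add_one_ne_zero, one_mul, C_eq_natCast]

theorem binomialPoly_mul_X_sub_C [CharZero K] (j : ℕ) (a : K) :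
    binomialPoly K j * (X - C a) =
      ((j : K) + 1) • binomialPoly K (j + 1) - (a - j) • binomialPoly K j := by
  rw [smul_binomialPoly_succ, smul_eq_C_mul]
  simp only [map_sub, C_eq_natCast]
  ring

theorem derivative_binomialPoly [CharZero K] (n : ℕ) :
    derivative (binomialPoly K n) =
      ∑ j ∈ range n, binomialPolyDerivCoeff K n j • binomialPoly K j := by
  induction n with
  | zero => simp [binomialPoly]
  | succ n ih =>
    apply smul_right_injective K[X] (n.cast_add_one_ne_zero (R := K))
    calc ((n : K) + 1) • derivative (binomialPoly K (n + 1))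
        = derivative (binomialPoly K n) * (X - C (n : K)) + binomialPoly K n := by
          rw [← derivative_smul, smul_binomialPoly_succ, derivative_mul, derivative_X_sub_C,
            mul_one]
      _ = ∑ j ∈ range n, ((binomialPolyDerivCoeff K n j * (j + 1)) • binomialPoly K (j + 1)
            + ((-1) ^ (n - j) : K) • binomialPoly K j) + binomialPoly K n := by
          rw [ih, sum_mul]
          congr 1
          refine sum_congr rfl fun j hj => ?_
          have hj : j < n := mem_range.mp hj
          rw [smul_mul_assoc, binomialPoly_mul_X_sub_C, smul_sub, smul_smul, smul_smul,
            mul_comm _ ((n : K) - j), sub_mul_binomialPolyDerivCoeff hj, sub_eq_add_neg,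
            ← neg_smul, show n - j = n - 1 - j + 1 by omega, pow_succ, mul_neg_one]
      _ = ∑ j ∈ range (n + 1), ((j : K) * binomialPolyDerivCoeff K (n + 1) j) • binomialPoly K j
            + ∑ j ∈ range (n + 1), ((-1) ^ (n - j) : K) • binomialPoly K j := by
          rw [sum_range_succ', sum_range_succ _ n, sum_add_distrib]
          simp only [binomialPolyDerivCoeff_succ_succ, Nat.cast_succ, Nat.cast_zero, zero_mul,
            zero_smul, add_zero, Nat.sub_self, pow_zero, one_smul, mul_comm (_ + 1 : K)]
          abel
      _ = ((n : K) + 1) •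
            ∑ j ∈ range (n + 1), binomialPolyDerivCoeff K (n + 1) j • binomialPoly K j := by
          rw [smul_sum, ← sum_add_distrib]
          refine sum_congr rfl fun j hj => ?_
          have h := sub_mul_binomialPolyDerivCoeff (K := K) (mem_range.mp hj)
          rw [Nat.add_sub_cancel, Nat.cast_succ] at h
          rw [← h, smul_smul, ← add_smul, ← add_mul, add_sub_cancel]

end

theorem derivative_binomial_polynomial_general (n : ℕ) :
    Polynomial.derivative
        (((n.factorial : ℝ))⁻¹ • descPochhammer ℝ n) =
      ∑ j ∈ Finset.range n,
        (((-1 : ℝ) ^ (n - 1 - j) / ((n : ℝ) - (j : ℝ))) •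
          (((j.factorial : ℝ))⁻¹ • descPochhammer ℝ j)) :=
  derivative_binomialPoly n

/-- Derivative identity for binomial-coefficient polynomials
`C(X, n) = X (X-1) ⋯ (X-n+1) / n!`:
`derivative (C(X, n)) = ∑_{j=0}^{n-1} ((-1)^(n-1-j) / (n-j)) • C(X, j)`. -/
theorem derivative_binomial_polynomial (n : ℕ) (hn : 1 ≤ n) :
    Polynomial.derivative
        (((n.factorial : ℝ))⁻¹ • descPochhammer ℝ n) =
      ∑ j ∈ Finset.range n,
        (((-1 : ℝ) ^ (n - 1 - j) / ((n : ℝ) - (j : ℝ))) •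
          (((j.factorial : ℝ))⁻¹ • descPochhammer ℝ j)) :=
  derivative_binomial_polynomial_general n
end
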